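/- arXiv:1204.3058 — 2 statements merged into one kernel-verified Lean document; each statement's English description precedes it below -/
import Mathlib

section
/- (Lemma 1: discrete increase of the view corresponds to a continuous decrease of the distance.) Let u, v be nodes and t_1 < t_2 be times. Suppose J is a journey from u to v with departure(J) = t_2 and arrival(J) = a, that a is the earliest arrival among journeys from u to v departing at or after t_2 (i.e., a = t_2 + d̂_{u,t_2}(v)), and that no journey from u to v with departure in [t_1, t_2) has arrival strictly before a. Then for every t' ∈ [t_1, t_2], the minimum defining d̂_{u,t'}(v) is attained and d̂_{u,t'}(v) = a − t' = d̂_{u,t_2}(v) + (t_2 − t'); in particular the temporal distance decreases continuously at unit rate over [t_1, t_2], an interval of duration t_2 − t_1. -/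
/-- A time-varying graph (TVG): a set of undirected edges `E`, a presence
function `ρ` telling whether an edge is present at a given time, and a
constant positive latency `ζ`. -/
structure TVG (V : Type*) where
  E : Set (Sym2 V)
  ρ : Sym2 V → ℝ → Prop
  ζ : ℝ
  ζ_pos : 0 < ζ

/-- A journey from `u` to `v` in a TVG `G`: a walk `vert 0, …, vert k` in the
underlying graph together with departure times `time 0, …, time (k-1)` of the
`k ≥ 1` hops, such that successive hops are separated by at least `ζ` and each
edge is continuously present during its traversal. -/
structure Journey {V : Type*} (G : TVG V) (u v : V) where
  k : ℕ
  k_pos : 0 < k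
  vert : ℕ → V
  time : ℕ → ℝ
  source_eq : vert 0 = u
  target_eq : vert k = v
  edge_mem : ∀ i < k, s(vert i, vert (i+1)) ∈ G.E
  step_le : ∀ i, i + 1 < k → time i + G.ζ ≤ time (i+1)
  present : ∀ i < k, ∀ s ∈ Set.Ico (time i) (time i + G.ζ), G.ρ s(vert i, vert (i+1)) s

namespace Journey
variable {V : Type*} {G : TVG V} {u v : V}

/-- Departure date of a journey. -/
def departure (J : Journey G u v) : ℝ := J.time 0

/-- Arrival date of a journey. -/
def arrival (J : Journey G u v) : ℝ := J.time (J.k - 1) + G.ζ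

/-- A journey is direct if every two successive edge traversals follow on
directly: `t_{i+1} = t_i + ζ`. -/
def IsDirect (J : Journey G u v) : Prop := ∀ i, i + 1 < J.k → J.time (i+1) = J.time i + G.ζ

end Journey

/-- Set of arrival dates of journeys from `u` to `v` departing at or after `t`.
Its least element (when attained) is `t + d̂_{u,t}(v)`. -/
def arrivalsFrom {V : Type*} (G : TVG V) (u v : V) (t : ℝ) : Set ℝ :=
  {a | ∃ J : Journey G u v, t ≤ J.departure ∧ J.arrival = a}

/-- Set of departure dates of journeys from `u` to `v` arriving by `t`.
Its greatest element (when attained) is the temporal view `φ_{v,t}(u)`. -/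
def departuresTo {V : Type*} (G : TVG V) (u v : V) (t : ℝ) : Set ℝ :=
  {d | ∃ J : Journey G u v, J.arrival ≤ t ∧ J.departure = d}

theorem arrivalsFrom_antitone {V : Type*} (G : TVG V) (u v : V) :
    Antitone (arrivalsFrom G u v) := by
  rintro t s hts b ⟨K, hK, rfl⟩
  exact ⟨K, hts.trans hK, rfl⟩

theorem isLeast_arrivalsFrom_of_le {V : Type*} {G : TVG V} {u v : V} {t t₂ a : ℝ}
    (ht : t ≤ t₂) (hleast : IsLeast (arrivalsFrom G u v t₂) a)
    (hno : ∀ K : Journey G u v, t ≤ K.departure → K.departure < t₂ → a ≤ K.arrival) :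
    IsLeast (arrivalsFrom G u v t) a := by
  refine ⟨arrivalsFrom_antitone G u v ht hleast.1, ?_⟩
  rintro b ⟨K, hK, rfl⟩
  rcases lt_or_ge K.departure t₂ with hbefore | hafter
  · exact hno K hK hbefore
  · exact hleast.2 ⟨K, hafter, rfl⟩

theorem stmt3_general {V : Type*} (G : TVG V) (u v : V) (t₁ t₂ a : ℝ)
    (hleast : IsLeast (arrivalsFrom G u v t₂) a)
    (hno : ∀ K : Journey G u v, t₁ ≤ K.departure → K.departure < t₂ → a ≤ K.arrival) :
    ∀ t' ∈ Set.Icc t₁ t₂, IsLeast (arrivalsFrom G u v t') a ∧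
      a - t' = (a - t₂) + (t₂ - t') := by
  intro t' ht'
  refine ⟨isLeast_arrivalsFrom_of_le ht'.2 hleast fun K hK => hno K (ht'.1.trans hK), ?_⟩
  ring

/-- Lemma 1: if a journey `J` departs at `t₂` and arrives at `a`,
`a` is the earliest arrival among journeys departing at or after `t₂`, and no
journey departing in `[t₁, t₂)` arrives strictly before `a`, then for every
`t' ∈ [t₁, t₂]` the minimum defining `d̂_{u,t'}(v)` is attained and equals
`a − t' = d̂_{u,t₂}(v) + (t₂ − t')`: the distance decreases continuously at
unit rate over `[t₁, t₂]`. -/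
theorem stmt3 {V : Type*} (G : TVG V) (u v : V) (t₁ t₂ a : ℝ) (h₁₂ : t₁ < t₂)
    (J : Journey G u v) (hdep : J.departure = t₂) (harr : J.arrival = a)
    (hleast : IsLeast (arrivalsFrom G u v t₂) a)
    (hno : ∀ K : Journey G u v, t₁ ≤ K.departure → K.departure < t₂ → a ≤ K.arrival) :
    ∀ t' ∈ Set.Icc t₁ t₂, IsLeast (arrivalsFrom G u v t') a ∧
      a - t' = (a - t₂) + (t₂ - t') :=
  stmt3_general G u v t₁ t₂ a hleast hno
end

section
/- (Equation (1): temporal distance and temporal view are the same quantity seen from the two endpoints.) Let u, v be nodes and t_e a time. Suppose the minimum defining d̂_{u,t_e}(v) is attained, let t_r = t_e + d̂_{u,t_e}(v) be the corresponding earliest reception date, and suppose moreover that no journey from u to v with departure strictly greater than t_e has arrival at most t_r. Then the maximum defining φ_{v,t_r}(u) is attained, φ_{v,t_r}(u) = t_e, and consequently d̂_{u,t_e}(v) = t_r − φ_{v,t_r}(u). -/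
section
variable {V : Type*} {G : TVG V} {u v : V}

theorem mem_upperBounds_departuresTo_iff {t te : ℝ} :
    te ∈ upperBounds (departuresTo G u v t) ↔
      ∀ J : Journey G u v, te < J.departure → ¬ J.arrival ≤ t := by
  constructor
  · intro h J hlt harr
    exact (h ⟨J, harr, rfl⟩).not_gt hlt
  · rintro h _ ⟨J, harr, rfl⟩
    exact le_of_not_gt fun hlt => h J hlt harr

theorem isGreatest_departuresTo_of_mem_arrivalsFrom {te A : ℝ}
    (hA : A ∈ arrivalsFrom G u v te) (hte : te ∈ upperBounds (departuresTo G u v A)) :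
    IsGreatest (departuresTo G u v A) te := by
  obtain ⟨J, hdep, rfl⟩ := hA
  have hJ : J.departure ∈ departuresTo G u v J.arrival := ⟨J, le_rfl, rfl⟩
  exact ⟨le_antisymm (hte hJ) hdep ▸ hJ, hte⟩

end

/-- Equation (1): if the minimum defining `d̂_{u,t_e}(v)` is
attained at `A` (so `t_r = t_e + d̂_{u,t_e}(v) = A` is the earliest reception
date) and no journey from `u` to `v` with departure strictly greater than
`t_e` arrives by `t_r`, then the maximum defining `φ_{v,t_r}(u)` is attained,
equals `t_e`, and `d̂_{u,t_e}(v) = t_r − φ_{v,t_r}(u)`. -/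
theorem stmt6 {V : Type*} (G : TVG V) (u v : V) (te A tr : ℝ)
    (hA : IsLeast (arrivalsFrom G u v te) A)
    (htr : tr = te + (A - te))
    (hno : ∀ J : Journey G u v, te < J.departure → ¬ J.arrival ≤ tr) :
    IsGreatest (departuresTo G u v tr) te ∧ A - te = tr - te := by
  obtain rfl : tr = A := by linarith
  exact ⟨isGreatest_departuresTo_of_mem_arrivalsFrom hA.1
    (mem_upperBounds_departuresTo_iff.mpr hno), rfl⟩
end
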